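/- Assume h(v) = A(‖v‖)v, where A : [0,∞) → M^n, each A(r) is nonsingular with tw(A(r)) < θ, and M := sup_r ‖A(r)⁻¹‖ < ∞. Fix ε ∈ (0, π/2) and assume ‖A((1+σ)r) − A(r)‖ < (εσ)/(πM) for all σ, r > 0. Then tw(h) < θ + ε/2, i.e., ∠(v₁ − v₀, h(v₁) − h(v₀)) < θ + ε/2 whenever v₀ ≠ v₁ and h(v₀) ≠ h(v₁). -/

import Mathlib

open Real InnerProductGeometry

/-- The twist of a continuous linear equivalence. -/
noncomputable def twCLE {n : ℕ}
    (B : EuclideanSpace ℝ (Fin n) ≃L[ℝ] EuclideanSpace ℝ (Fin n)) : ℝ :=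
  sSup {a | ∃ v : EuclideanSpace ℝ (Fin n), v ≠ 0 ∧ a = angle v (B v)}

/-!
Write `r₀ = ‖v₀‖ ≤ r₁ = ‖v₁‖` and `u = v₁ - v₀`. Then
`h v₁ - h v₀ = A r₁ u + (A r₁ - A r₀) v₀`. The first term makes an angle less than `θ` with `u`.
The scaling hypothesis bounds the second term by `ε (r₁ - r₀) / (π M) ≤ ε ‖u‖ / (π M)`, hence by
`(ε / π) ‖A r₁ u‖ < sin (ε / 2) ‖A r₁ u‖` (Jordan's inequality). A perturbation of norm less
than `sin δ ‖x‖` turns `x` by an angle less than `δ`, so the triangle inequality for angles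
concludes.
-/

open RealInnerProductSpace

namespace InnerProductGeometry

variable {V : Type*} [NormedAddCommGroup V] [InnerProductSpace ℝ V]

-- `sin (angle x y) * ‖x‖` is the distance from `x` to the line `ℝ ∙ y`, which contains `y`.
theorem sin_angle_mul_norm_le_norm_sub (x y : V) : sin (angle x y) * ‖x‖ ≤ ‖x - y‖ := by
  rcases eq_or_ne y 0 with rfl | hy
  · simp [angle_zero_right]
  have gram : ⟪x, x⟫ * ⟪y, y⟫ - ⟪x, y⟫ * ⟪x, y⟫ = (‖x - y‖ * ‖y‖) ^ 2 - ⟪x - y, y⟫ ^ 2 := by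
    simp only [mul_pow, ← real_inner_self_eq_norm_sq, inner_sub_left, inner_sub_right,
      real_inner_comm x y]
    ring
  refine le_of_mul_le_mul_right ?_ (norm_pos_iff.2 hy)
  calc sin (angle x y) * ‖x‖ * ‖y‖ = √(⟪x, x⟫ * ⟪y, y⟫ - ⟪x, y⟫ * ⟪x, y⟫) := by
        rw [mul_assoc, sin_angle_mul_norm_mul_norm]
    _ ≤ √((‖x - y‖ * ‖y‖) ^ 2) := Real.sqrt_le_sqrt (by rw [gram]; nlinarith [sq_nonneg ⟪x - y, y⟫])
    _ = ‖x - y‖ * ‖y‖ := Real.sqrt_sq (by positivity)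

theorem angle_add_lt_of_norm_lt_sin_mul_norm {x w : V} {δ : ℝ} (hδ₀ : 0 < δ) (hδ : δ ≤ π / 2)
    (hw : ‖w‖ < sin δ * ‖x‖) : angle x (x + w) < δ := by
  have hw_lt : ‖w‖ < ‖x‖ := hw.trans_le (mul_le_of_le_one_left (norm_nonneg x) (sin_le_one δ))
  have hacute : angle x (x + w) ≤ π / 2 := by
    rw [angle, arccos_le_pi_div_two]
    refine div_nonneg ?_ (by positivity)
    rw [inner_add_right, real_inner_self_eq_norm_sq]
    nlinarith [neg_le_of_abs_le (abs_real_inner_le_norm x w), norm_nonneg x]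
  by_contra! hle
  have hsin : sin δ ≤ sin (angle x (x + w)) :=
    sin_le_sin_of_le_of_le_pi_div_two (by linarith) hacute hle
  have hdist := sin_angle_mul_norm_le_norm_sub x (x + w)
  rw [sub_add_cancel_left, norm_neg] at hdist
  nlinarith [norm_nonneg x]

theorem angle_add_lt_add_of_angle_lt {u x w : V} {θ δ : ℝ} (hux : angle u x < θ)
    (hδ₀ : 0 < δ) (hδ : δ ≤ π / 2) (hw : ‖w‖ < sin δ * ‖x‖) : angle u (x + w) < θ + δ :=
  (angle_le_angle_add_angle u x (x + w)).trans_lt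
    (add_lt_add hux (angle_add_lt_of_norm_lt_sin_mul_norm hδ₀ hδ hw))

end InnerProductGeometry

theorem angle_le_twCLE {n : ℕ} (B : EuclideanSpace ℝ (Fin n) ≃L[ℝ] EuclideanSpace ℝ (Fin n))
    {v : EuclideanSpace ℝ (Fin n)} (hv : v ≠ 0) : angle v (B v) ≤ twCLE B :=
  le_csSup ⟨π, by rintro a ⟨u, -, rfl⟩; exact angle_le_pi _ _⟩ ⟨v, hv, rfl⟩

theorem mul_norm_sub_le_of_norm_scale_sub_lt {E : Type*} [SeminormedAddCommGroup E] {F : ℝ → E}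
    {c : ℝ} (hc : 0 ≤ c) (hF : ∀ σ r : ℝ, 0 < σ → 0 < r → ‖F ((1 + σ) * r) - F r‖ < c * σ)
    {r₀ r₁ : ℝ} (h₀ : 0 ≤ r₀) (h₁ : r₀ ≤ r₁) : r₀ * ‖F r₁ - F r₀‖ ≤ c * (r₁ - r₀) := by
  rcases h₀.eq_or_lt with rfl | h₀
  · simpa using mul_nonneg hc h₁
  rcases h₁.eq_or_lt with rfl | h₁
  · simp
  have hσ : 0 < r₁ / r₀ - 1 := by rw [sub_pos, one_lt_div h₀]; exact h₁
  have hscale : (1 + (r₁ / r₀ - 1)) * r₀ = r₁ := by field_simp; ring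
  have := hF _ r₀ hσ h₀
  rw [hscale] at this
  calc r₀ * ‖F r₁ - F r₀‖ ≤ r₀ * (c * (r₁ / r₀ - 1)) := by gcongr
    _ = c * (r₁ - r₀) := by field_simp

theorem ContinuousLinearEquiv.norm_le_mul_norm_apply {𝕜 E F : Type*} [NontriviallyNormedField 𝕜]
    [SeminormedAddCommGroup E] [SeminormedAddCommGroup F] [NormedSpace 𝕜 E] [NormedSpace 𝕜 F]
    (e : E ≃L[𝕜] F) {M : ℝ} (he : ‖(e.symm : F →L[𝕜] E)‖ ≤ M) (u : E) : ‖u‖ ≤ M * ‖e u‖ :=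
  calc ‖u‖ = ‖(e.symm : F →L[𝕜] E) (e u)‖ := by simp
    _ ≤ ‖(e.symm : F →L[𝕜] E)‖ * ‖e u‖ := ContinuousLinearMap.le_opNorm _ _
    _ ≤ M * ‖e u‖ := by gcongr

variable {V : Type*} [NormedAddCommGroup V] [InnerProductSpace ℝ V] in
theorem angle_sub_radial_sub_lt {A : ℝ → V ≃L[ℝ] V} {θ M ε : ℝ} (hM : 0 < M) (hε₀ : 0 < ε)
    (hε : ε < π) (htw : ∀ r u, u ≠ 0 → angle u (A r u) < θ)
    (hMbound : ∀ r, ‖((A r).symm : V →L[ℝ] V)‖ ≤ M)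
    (hA : ∀ r₀ r₁, 0 ≤ r₀ → r₀ ≤ r₁ →
      r₀ * ‖(A r₁ : V →L[ℝ] V) - A r₀‖ ≤ ε / (π * M) * (r₁ - r₀))
    {v₀ v₁ : V} (hne : v₀ ≠ v₁) : angle (v₁ - v₀) (A ‖v₁‖ v₁ - A ‖v₀‖ v₀) < θ + ε / 2 := by
  wlog hle : ‖v₀‖ ≤ ‖v₁‖ generalizing v₀ v₁
  · rw [← angle_neg_neg, neg_sub, neg_sub]
    exact this hne.symm (le_of_not_ge hle)
  set u := v₁ - v₀
  set x := A ‖v₁‖ u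
  set w := ((A ‖v₁‖ : V →L[ℝ] V) - A ‖v₀‖) v₀
  have hu : u ≠ 0 := sub_ne_zero.2 hne.symm
  have hx : 0 < ‖x‖ := norm_pos_iff.2 ((A ‖v₁‖).map_ne_zero_iff.2 hu)
  have hdecomp : A ‖v₁‖ v₁ - A ‖v₀‖ v₀ = x + w := by simp [x, w, u]
  have hw : ‖w‖ ≤ ε / π * ‖x‖ :=
    calc ‖w‖ ≤ ‖(A ‖v₁‖ : V →L[ℝ] V) - A ‖v₀‖‖ * ‖v₀‖ := ContinuousLinearMap.le_opNorm _ _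
      _ ≤ ε / (π * M) * (‖v₁‖ - ‖v₀‖) := by
        rw [mul_comm]; exact hA _ _ (norm_nonneg _) hle
      _ ≤ ε / (π * M) * (M * ‖x‖) := by
        gcongr
        exact (norm_sub_norm_le v₁ v₀).trans ((A ‖v₁‖).norm_le_mul_norm_apply (hMbound _) u)
      _ = ε / π * ‖x‖ := by field_simp
  have hjordan : ε / π < sin (ε / 2) := by
    convert mul_lt_sin (x := ε / 2) (by positivity) (by linarith) using 1
    ring
  rw [hdecomp]
  exact angle_add_lt_add_of_angle_lt (htw _ _ hu) (by positivity) (by linarith)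
    (hw.trans_lt (by gcongr))

theorem morph_twist_bound {n : ℕ} (θ : ℝ)
    (A : ℝ → (EuclideanSpace ℝ (Fin n) ≃L[ℝ] EuclideanSpace ℝ (Fin n)))
    (h : EuclideanSpace ℝ (Fin n) → EuclideanSpace ℝ (Fin n))
    (hh : ∀ v, h v = A ‖v‖ v)
    (htw : ∀ r : ℝ, twCLE (A r) < θ)
    (M : ℝ) (hM : 0 < M)
    (hMbound : ∀ r : ℝ, ‖((A r).symm : EuclideanSpace ℝ (Fin n) →L[ℝ] EuclideanSpace ℝ (Fin n))‖ ≤ M)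
    (ε : ℝ) (hε : ε ∈ Set.Ioo 0 (π / 2))
    (hA : ∀ σ r : ℝ, 0 < σ → 0 < r →
      ‖((A ((1 + σ) * r) : EuclideanSpace ℝ (Fin n) →L[ℝ] EuclideanSpace ℝ (Fin n))
        - (A r : EuclideanSpace ℝ (Fin n) →L[ℝ] EuclideanSpace ℝ (Fin n)))‖ < ε * σ / (π * M)) :
    ∀ v₀ v₁ : EuclideanSpace ℝ (Fin n), v₀ ≠ v₁ → h v₀ ≠ h v₁ →
      angle (v₁ - v₀) (h v₁ - h v₀) < θ + ε / 2 := by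
  intro v₀ v₁ hne _
  obtain ⟨hε₀, hε⟩ := hε
  let F : ℝ → EuclideanSpace ℝ (Fin n) →L[ℝ] EuclideanSpace ℝ (Fin n) := fun r => A r
  have hF : ∀ σ r : ℝ, 0 < σ → 0 < r → ‖F ((1 + σ) * r) - F r‖ < ε / (π * M) * σ := by
    simpa only [div_mul_eq_mul_div] using hA
  rw [hh, hh]
  exact angle_sub_radial_sub_lt hM hε₀ (by linarith [pi_pos])
    (fun r _ hu => (angle_le_twCLE (A r) hu).trans_lt (htw r)) hMbound
    (fun _ _ => mul_norm_sub_le_of_norm_scale_sub_lt (by positivity) hF) hne
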